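/- arXiv:0804.0321 — 2 statements merged into one kernel-verified Lean document; each statement's English description precedes it below -/
import Mathlib

section
/- For every t ≥ 0, every y ∈ [y_C(0,t), 1) and every bounded continuous g : [0,∞) → ℝ, the change-of-variables identity ∫_{ŷ(y,t)}^1 ∫_{[0,∞)} g(w) e^{−wt} μ_{u,0}(dw) du = ∫_y^1 ( ∫_{[0,∞)} g(w) e^{−wt} μ_{ŷ(z,t),0}(dw) / ∫_{[0,∞)} e^{−wt} μ_{ŷ(z,t),0}(dw) ) dz holds. -/
open MeasureTheory Filter Topology Real Set NNReal BoundedContinuousFunction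

noncomputable section

/-! The map `y ↦ y_C(y,t)` is a primitive of the positive density
`f(z) = ∫ e^{-wt} μ_{z,0}(dw)`, so the pullback of Lebesgue measure under it is `f(u) du`.
Substituting `z = y_C(u,t)` in the right-hand side therefore multiplies the integrand by `f(u)`,
which cancels the denominator `f(ŷ(y_C(u,t),t)) = f(u)`. -/

section ChangeOfVariables

variable {φ f : ℝ → ℝ}

theorem continuous_of_sub_eq_integral (hf : ∀ a b, IntervalIntegrable f volume a b)
    (hφ : ∀ a b, φ b - φ a = ∫ u in a..b, f u) : Continuous φ := by
  have h : φ = fun x => φ 0 + ∫ u in (0 : ℝ)..x, f u := by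
    funext x
    linarith [hφ 0 x]
  rw [h]
  exact continuous_const.add (intervalIntegral.continuous_primitive hf 0)

theorem strictMono_of_sub_eq_integral (hf : ∀ a b, IntervalIntegrable f volume a b)
    (hpos : ∀ u, 0 < f u) (hφ : ∀ a b, φ b - φ a = ∫ u in a..b, f u) : StrictMono φ :=
  fun a b hab => sub_pos.1 <| (hφ a b).symm ▸ intervalIntegral.intervalIntegral_pos_of_pos
    (hf a b) hpos hab

theorem Ioc_subset_range_of_continuous (hφ : Continuous φ) {a b : ℝ} (hab : a ≤ b) :
    Ioc (φ a) (φ b) ⊆ range φ :=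
  (intermediate_value_Ioc hab hφ.continuousOn).trans (image_subset_range _ _)

theorem preimage_Ioc_of_strictMono (hmono : StrictMono φ) (a b : ℝ) :
    φ ⁻¹' Ioc (φ a) (φ b) = Ioc a b :=
  (OrderEmbedding.ofStrictMono φ hmono).preimage_Ioc a b

theorem image_Ioc_of_strictMono_of_continuous (hmono : StrictMono φ) (hφ : Continuous φ)
    {a b : ℝ} (hab : a ≤ b) : φ '' Ioc a b = Ioc (φ a) (φ b) := by
  rw [← preimage_Ioc_of_strictMono hmono a b]
  exact image_preimage_eq_of_subset (Ioc_subset_range_of_continuous hφ hab)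

variable (hf : ∀ a b, IntervalIntegrable f volume a b) (hf0 : ∀ u, 0 ≤ f u)
  (hφ : ∀ a b, φ b - φ a = ∫ u in a..b, f u)
include hf hf0 hφ

theorem withDensity_ofReal_Ioc_of_sub_eq_integral {a b : ℝ} (hab : a ≤ b) :
    volume.withDensity (fun u => ENNReal.ofReal (f u)) (Ioc a b) =
      ENNReal.ofReal (φ b - φ a) := by
  rw [withDensity_apply _ measurableSet_Ioc, hφ, intervalIntegral.integral_of_le hab,
    ofReal_integral_eq_lintegral_ofReal (hf a b).1 (ae_of_all _ hf0)]

theorem comap_volume_eq_withDensity_of_sub_eq_integral (hmono : StrictMono φ) :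
    volume.comap φ = volume.withDensity (fun u => ENNReal.ofReal (f u)) := by
  have hcont := continuous_of_sub_eq_integral hf hφ
  refine (Measure.ext_of_Ioc' _ _ (fun a b hab => ?_) fun a b hab => ?_).symm
  · rw [withDensity_ofReal_Ioc_of_sub_eq_integral hf hf0 hφ hab.le]
    exact ENNReal.ofReal_ne_top
  · rw [withDensity_ofReal_Ioc_of_sub_eq_integral hf hf0 hφ hab.le,
      (hcont.measurableEmbedding hmono.injective).comap_apply,
      image_Ioc_of_strictMono_of_continuous hmono hcont hab.le, Real.volume_Ioc]

theorem integral_comp_mul_of_sub_eq_integral (hmono : StrictMono φ) (h : ℝ → ℝ) {a b : ℝ}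
    (hab : a ≤ b) : ∫ z in φ a..φ b, h z = ∫ u in a..b, f u * h (φ u) := by
  have hcont := continuous_of_sub_eq_integral hf hφ
  have hemb := hcont.measurableEmbedding hmono.injective
  rw [intervalIntegral.integral_of_le (hmono.monotone hab), intervalIntegral.integral_of_le hab]
  calc ∫ z in Ioc (φ a) (φ b), h z
      = ∫ z in Ioc (φ a) (φ b), h z ∂(volume.restrict (range φ)) := by
        rw [Measure.restrict_restrict measurableSet_Ioc,
          inter_eq_left.2 (Ioc_subset_range_of_continuous hcont hab)]
    _ = ∫ u in φ ⁻¹' Ioc (φ a) (φ b), h (φ u) ∂(volume.comap φ) := by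
        rw [← hemb.map_comap, hemb.setIntegral_map]
    _ = ∫ u in Ioc a b, f u * h (φ u) := by
        rw [preimage_Ioc_of_strictMono hmono a b,
          comap_volume_eq_withDensity_of_sub_eq_integral hf hf0 hφ hmono,
          setIntegral_withDensity_eq_setIntegral_toReal_smul₀
            (hf a b).1.aemeasurable.ennreal_ofReal (ae_of_all _ fun _ => ENNReal.ofReal_lt_top)
            _ measurableSet_Ioc]
        simp only [ENNReal.toReal_ofReal (hf0 _), smul_eq_mul]

end ChangeOfVariables

theorem intervalIntegrable_integral_of_aemeasurable {X : Type*} [TopologicalSpace X]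
    [MeasurableSpace X] [OpensMeasurableSpace X] (μ : ℝ → Measure X)
    [∀ z, IsProbabilityMeasure (μ z)] (F : X →ᵇ ℝ)
    (hF : AEMeasurable (fun z => ∫ x, F x ∂(μ z)) volume) (a b : ℝ) :
    IntervalIntegrable (fun z => ∫ x, F x ∂(μ z)) volume a b := by
  have hbound : ∀ s : Set ℝ, volume s ≠ ⊤ →
      IntegrableOn (fun z => ∫ x, F x ∂(μ z)) s :=
    fun s hs => Measure.integrableOn_of_bounded hs hF.aestronglyMeasurable
      (ae_of_all _ fun z => F.norm_integral_le_norm (μ z))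
  exact ⟨hbound _ measure_Ioc_lt_top.ne, hbound _ measure_Ioc_lt_top.ne⟩

def expNegMul (t : ℝ) (ht : 0 ≤ t) : ℝ≥0 →ᵇ ℝ :=
  BoundedContinuousFunction.ofNormedAddCommGroup (fun x : ℝ≥0 => rexp (-(x : ℝ) * t))
    (by fun_prop) 1 fun x => by
      rw [Real.norm_eq_abs, abs_of_pos (exp_pos _), exp_le_one_iff]
      nlinarith [x.coe_nonneg]

/-- change-of-variables identity for the inverse `ŷ(·,t)` of `y ↦ y_C(y,t)`:
`∫_{ŷ(y,t)}^1 ∫ g(w) e^{-wt} μ_{u,0}(dw) du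
  = ∫_y^1 (∫ g(w) e^{-wt} μ_{ŷ(z,t),0}(dw)) / (∫ e^{-wt} μ_{ŷ(z,t),0}(dw)) dz`. -/
theorem stmt14
    (μ0 : ℝ → Measure ℝ≥0) [∀ z, IsProbabilityMeasure (μ0 z)]
    (hμ0meas : ∀ g : ℝ≥0 →ᵇ ℝ, AEMeasurable (fun z => ∫ x, g x ∂(μ0 z)) volume)
    (t : ℝ) (ht : 0 ≤ t)
    (yCy : ℝ → ℝ)
    (hyCy : ∀ y : ℝ, yCy y = 1 - ∫ z in y..1, ∫ x, rexp (-(x : ℝ) * t) ∂(μ0 z))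
    (yhat : ℝ → ℝ)
    (hyhat : ∀ y ∈ Ico (yCy 0) 1, yhat y ∈ Ico (0 : ℝ) 1 ∧ yCy (yhat y) = y)
    (hyhat' : ∀ x ∈ Ico (0 : ℝ) 1, yhat (yCy x) = x)
    (g : ℝ≥0 →ᵇ ℝ) (y : ℝ) (hy : y ∈ Ico (yCy 0) 1) :
    ∫ u in (yhat y)..1, ∫ x, g x * rexp (-(x : ℝ) * t) ∂(μ0 u)
      = ∫ z in y..1,
          (∫ x, g x * rexp (-(x : ℝ) * t) ∂(μ0 (yhat z)))
            / (∫ x, rexp (-(x : ℝ) * t) ∂(μ0 (yhat z))) := by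
  obtain ⟨⟨ha0, ha1⟩, hya⟩ := hyhat y hy
  let E := expNegMul t ht
  let f : ℝ → ℝ := fun z => ∫ x, rexp (-(x : ℝ) * t) ∂(μ0 z)
  have hf : ∀ a b, IntervalIntegrable f volume a b :=
    intervalIntegrable_integral_of_aemeasurable μ0 E (hμ0meas E)
  have hpos : ∀ u, 0 < f u := fun u => integral_exp_pos (E.integrable (μ0 u))
  have hφ : ∀ a b, yCy b - yCy a = ∫ u in a..b, f u := fun a b => by
    rw [hyCy, hyCy, ← intervalIntegral.integral_add_adjacent_intervals (hf a b) (hf b 1)]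
    ring
  have hmono := strictMono_of_sub_eq_integral hf hpos hφ
  have key := integral_comp_mul_of_sub_eq_integral hf (fun u => (hpos u).le) hφ hmono
    (fun z => (∫ x, (g * E) x ∂(μ0 (yhat z))) / f (yhat z)) ha1.le
  have hyCy1 : yCy 1 = 1 := by simp [hyCy]
  rw [hya, hyCy1] at key
  refine (intervalIntegral.integral_congr_ae ?_).trans key.symm
  filter_upwards [volume.ae_ne 1] with u hu1 hu
  rw [uIoc_of_le ha1.le] at hu
  rw [hyhat' u ⟨ha0.trans hu.1.le, lt_of_le_of_ne hu.2 hu1⟩, mul_div_cancel₀ _ (hpos u).ne']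
  rfl
end
end

section
/- Let λ be a Borel probability measure on [0,∞) with λ({0}) = 0 and ∫_{[0,∞)} w λ(dw) < ∞, let y_C(t) = 1 − ∫_{[0,∞)} e^{−wt} λ(dw), and let t_0 : [0,1) → [0,∞) be the inverse function of y_C. Then for every y ∈ [0,1) and every bounded continuous g : [0,∞) → ℝ, ∫_0^y ( ∫_{[0,∞)} g(w) w e^{−w t_0(z)} λ(dw) / ∫_{[0,∞)} w e^{−w t_0(z)} λ(dw) ) dz = ∫_{[0,∞)} g(w) (1 − e^{−w t_0(y)}) λ(dw). -/
/-!
With `D t = ∫ w e^{-wt} λ(dw)`, `N t = ∫ g(w) w e^{-wt} λ(dw)` and `F t = -∫ g(w) e^{-wt} λ(dw)`,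
differentiation under the integral sign gives `y_C' = D` and `F' = N` on `(0, ∞)`, and `D > 0`
because `λ` is not concentrated at `0`. So `y_C` is strictly increasing, its inverse `t_0` has
derivative `1 / D(t_0)`, and the integrand `N(t_0 z) / D(t_0 z)`, bounded by `‖g‖`, is the derivative
of `F ∘ t_0`. The fundamental theorem of calculus turns the left side into
`F(t_0 y) - F(0) = ∫ g(w) (1 - e^{-w t_0(y)}) λ(dw)`.
-/

open MeasureTheory Filter Topology Real Set NNReal BoundedContinuousFunction

theorem MonotoneOn.continuousOn_of_image_Icc {α β : Type*} [LinearOrder α] [TopologicalSpace α]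
    [OrderTopology α] [LinearOrder β] [TopologicalSpace β] [OrderTopology β] [DenselyOrdered β]
    {f : α → β} {a b : α} {c d : β} (hab : a ≤ b) (hf : MonotoneOn f (Icc a b))
    (himage : f '' Icc a b = Icc c d) : ContinuousOn f (Icc a b) := by
  let h : α → Icc c d := fun z =>
    ⟨f (projIcc a b hab z), himage ▸ mem_image_of_mem f (projIcc a b hab z).2⟩
  have hmono : Monotone h := fun z w hzw =>
    hf (projIcc a b hab z).2 (projIcc a b hab w).2 (monotone_projIcc hab hzw)
  have hsurj : Function.Surjective h := by
    rintro ⟨u, hu⟩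
    rw [← himage] at hu
    obtain ⟨t, ht, rfl⟩ := hu
    exact ⟨t, Subtype.ext (by simp [h, projIcc_of_mem hab ht])⟩
  refine (continuous_subtype_val.comp (hmono.continuous_of_surjective hsurj)).continuousOn.congr ?_
  intro z hz
  simp [h, projIcc_of_mem hab hz]

section Inverse

variable {f g : ℝ → ℝ} {a b : ℝ}

theorem StrictMonoOn.invOn_of_rightInvOn (hf : StrictMonoOn f (Icc a b))
    (hg : MapsTo g (Icc (f a) (f b)) (Icc a b)) (hfg : RightInvOn g f (Icc (f a) (f b))) :
    InvOn g f (Icc a b) (Icc (f a) (f b)) :=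
  ⟨hf.injOn.rightInvOn_of_leftInvOn hfg hf.monotoneOn.mapsTo_Icc hg, hfg⟩

theorem StrictMonoOn.continuousOn_of_invOn (hab : a ≤ b) (hf : StrictMonoOn f (Icc a b))
    (hg : MapsTo g (Icc (f a) (f b)) (Icc a b)) (hinv : InvOn g f (Icc a b) (Icc (f a) (f b))) :
    ContinuousOn g (Icc (f a) (f b)) := by
  have hfab : f a ≤ f b := hf.monotoneOn (left_mem_Icc.2 hab) (right_mem_Icc.2 hab) hab
  refine MonotoneOn.continuousOn_of_image_Icc hfab (fun z hz w hw hzw => ?_)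
    (hinv.symm.bijOn hg hf.monotoneOn.mapsTo_Icc).image_eq
  rwa [← hf.le_iff_le (hg hz) (hg hw), hinv.2 hz, hinv.2 hw]

theorem integral_div_comp_rightInvOn_eq_sub {F D N : ℝ → ℝ} {C : ℝ} (hab : a ≤ b)
    (hf : StrictMonoOn f (Icc a b)) (hf' : ∀ t ∈ Ioo a b, HasDerivAt f (D t) t)
    (hD : ∀ t ∈ Ioo a b, 0 < D t) (hF : ContinuousOn F (Icc a b))
    (hF' : ∀ t ∈ Ioo a b, HasDerivAt F (N t) t) (hbound : ∀ t ∈ Ioo a b, |N t| ≤ C * D t)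
    (hg : MapsTo g (Icc (f a) (f b)) (Icc a b)) (hfg : RightInvOn g f (Icc (f a) (f b))) :
    ∫ z in f a..f b, N (g z) / D (g z) = F b - F a := by
  have hfab : f a ≤ f b := hf.monotoneOn (left_mem_Icc.2 hab) (right_mem_Icc.2 hab) hab
  have hinv := hf.invOn_of_rightInvOn hg hfg
  have hgc := hf.continuousOn_of_invOn hab hg hinv
  have hgIoo : MapsTo g (Ioo (f a) (f b)) (Ioo a b) := fun z hz => by
    have hz' := Ioo_subset_Icc_self hz
    refine ⟨(hg hz').1.lt_of_ne ?_, (hg hz').2.lt_of_ne ?_⟩ <;> rintro h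
    · exact hz.1.ne (by rw [h, hfg hz'])
    · exact hz.2.ne (by rw [← h, hfg hz'])
  have hderiv : ∀ z ∈ Ioo (f a) (f b), HasDerivAt (F ∘ g) (N (g z) / D (g z)) z := by
    intro z hz
    have hnhds : Icc (f a) (f b) ∈ 𝓝 z := Icc_mem_nhds hz.1 hz.2
    have hg' : HasDerivAt g (D (g z))⁻¹ z :=
      (hf' _ (hgIoo hz)).of_local_left_inverse (hgc.continuousAt hnhds) (hD _ (hgIoo hz)).ne'
        (eventually_of_mem hnhds hfg)
    simpa only [div_eq_mul_inv] using (hF' _ (hgIoo hz)).comp z hg'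
  have hint : IntervalIntegrable (fun z => N (g z) / D (g z)) volume (f a) (f b) := by
    rw [intervalIntegrable_iff_integrableOn_Ioo_of_le hfab]
    refine ⟨(measurable_deriv (F ∘ g)).aestronglyMeasurable.congr ?_,
      HasFiniteIntegral.restrict_of_bounded (C := C) measure_Ioo_lt_top ?_⟩
    -- the integrand agrees on `Ioo` with `deriv (F ∘ g)`, which is measurable
    · exact ae_restrict_of_forall_mem measurableSet_Ioo fun z hz => (hderiv z hz).deriv
    · refine ae_restrict_of_forall_mem measurableSet_Ioo fun z hz => ?_
      have hDz := hD _ (hgIoo hz)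
      rw [norm_div, norm_of_nonneg hDz.le, div_le_iff₀ hDz]
      exact hbound _ (hgIoo hz)
  rw [intervalIntegral.integral_eq_sub_of_hasDerivAt_of_le hfab (hF.comp hgc hg) hderiv hint,
    Function.comp_apply, Function.comp_apply, hinv.1 (right_mem_Icc.2 hab),
    hinv.1 (left_mem_Icc.2 hab)]

end Inverse

section Laplace

variable {lam : Measure ℝ≥0} {t : ℝ}

lemma exp_neg_mul_le_one (x : ℝ≥0) (ht : 0 ≤ t) : rexp (-(x : ℝ) * t) ≤ 1 :=
  exp_le_one_iff.2 (by nlinarith [x.coe_nonneg])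

lemma norm_mul_exp_neg_mul_le (g : ℝ≥0 →ᵇ ℝ) (x : ℝ≥0) (ht : 0 ≤ t) :
    ‖g x * rexp (-(x : ℝ) * t)‖ ≤ ‖g‖ := by
  rw [norm_mul, norm_of_nonneg (exp_pos _).le]
  exact (mul_le_of_le_one_right (norm_nonneg _) (exp_neg_mul_le_one x ht)).trans
    (g.norm_coe_le_norm x)

lemma norm_mul_mul_exp_neg_mul_le (g : ℝ≥0 →ᵇ ℝ) (x : ℝ≥0) (ht : 0 ≤ t) :
    ‖g x * ((x : ℝ) * rexp (-(x : ℝ) * t))‖ ≤ ‖g‖ * x := by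
  rw [norm_mul, norm_mul, norm_of_nonneg x.coe_nonneg, norm_of_nonneg (exp_pos _).le]
  gcongr
  · exact g.norm_coe_le_norm x
  · exact mul_le_of_le_one_right x.coe_nonneg (exp_neg_mul_le_one x ht)

lemma integrable_mul_exp_neg_mul [IsFiniteMeasure lam] (g : ℝ≥0 →ᵇ ℝ) (ht : 0 ≤ t) :
    Integrable (fun x : ℝ≥0 => g x * rexp (-(x : ℝ) * t)) lam :=
  (integrable_const ‖g‖).mono' (by fun_prop : Continuous _).aestronglyMeasurable
    (ae_of_all _ fun x => norm_mul_exp_neg_mul_le g x ht)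

lemma integrable_coe_mul_exp_neg_mul (hmean : Integrable (fun x : ℝ≥0 => (x : ℝ)) lam)
    (ht : 0 ≤ t) : Integrable (fun x : ℝ≥0 => (x : ℝ) * rexp (-(x : ℝ) * t)) lam :=
  hmean.mul_bdd (by fun_prop : Continuous _).aestronglyMeasurable
    (ae_of_all _ fun x => (norm_of_nonneg (exp_pos _).le).trans_le (exp_neg_mul_le_one x ht))

lemma continuousOn_integral_mul_exp_neg_mul [IsFiniteMeasure lam] (g : ℝ≥0 →ᵇ ℝ) :
    ContinuousOn (fun t => ∫ x, g x * rexp (-(x : ℝ) * t) ∂lam) (Ici 0) :=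
  continuousOn_of_dominated (fun _ _ => (by fun_prop : Continuous _).aestronglyMeasurable)
    (fun _ ht => ae_of_all _ fun x => norm_mul_exp_neg_mul_le g x ht) (integrable_const ‖g‖)
    (ae_of_all _ fun _ => (by fun_prop : Continuous _).continuousOn)

lemma hasDerivAt_integral_mul_exp_neg_mul [IsFiniteMeasure lam]
    (hmean : Integrable (fun x : ℝ≥0 => (x : ℝ)) lam) (g : ℝ≥0 →ᵇ ℝ) (ht : 0 < t) :
    HasDerivAt (fun s => ∫ x, g x * rexp (-(x : ℝ) * s) ∂lam)
      (-∫ x, g x * ((x : ℝ) * rexp (-(x : ℝ) * t)) ∂lam) t := by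
  rw [← integral_neg]
  refine (hasDerivAt_integral_of_dominated_loc_of_deriv_le
    (F := fun s (x : ℝ≥0) => g x * rexp (-(x : ℝ) * s))
    (F' := fun s (x : ℝ≥0) => -(g x * ((x : ℝ) * rexp (-(x : ℝ) * s))))
    (bound := fun x : ℝ≥0 => ‖g‖ * x)
    (Ioi_mem_nhds ht) (.of_forall fun _ => (by fun_prop : Continuous _).aestronglyMeasurable)
    (integrable_mul_exp_neg_mul g ht.le) (by fun_prop : Continuous _).aestronglyMeasurable
    (ae_of_all _ fun x s hs => ?_) (hmean.const_mul _) (ae_of_all _ fun x s _ => ?_)).2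
  · rw [norm_neg]
    exact norm_mul_mul_exp_neg_mul_le g x (le_of_lt hs)
  · exact (((hasDerivAt_id' s).const_mul (-(x : ℝ))).exp.const_mul (g x)).congr_deriv (by ring)

lemma integral_coe_mul_exp_neg_mul_pos (hmean : Integrable (fun x : ℝ≥0 => (x : ℝ)) lam)
    (hlam : lam {0}ᶜ ≠ 0) (ht : 0 ≤ t) : 0 < ∫ x, (x : ℝ) * rexp (-(x : ℝ) * t) ∂lam := by
  rw [integral_pos_iff_support_of_nonneg (fun x => by positivity)
    (integrable_coe_mul_exp_neg_mul hmean ht)]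
  have hsupp : Function.support (fun x : ℝ≥0 => (x : ℝ) * rexp (-(x : ℝ) * t)) = {0}ᶜ := by
    ext x
    simp [exp_ne_zero]
  rwa [hsupp, pos_iff_ne_zero]

lemma abs_integral_mul_mul_exp_neg_mul_le (hmean : Integrable (fun x : ℝ≥0 => (x : ℝ)) lam)
    (g : ℝ≥0 →ᵇ ℝ) (ht : 0 ≤ t) :
    |∫ x, g x * ((x : ℝ) * rexp (-(x : ℝ) * t)) ∂lam|
      ≤ ‖g‖ * ∫ x, (x : ℝ) * rexp (-(x : ℝ) * t) ∂lam := by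
  rw [← integral_const_mul, ← Real.norm_eq_abs]
  refine norm_integral_le_of_norm_le ((integrable_coe_mul_exp_neg_mul hmean ht).const_mul _)
    (ae_of_all _ fun x => ?_)
  rw [norm_mul, norm_of_nonneg (by positivity : (0 : ℝ) ≤ (x : ℝ) * rexp (-(x : ℝ) * t))]
  exact mul_le_mul_of_nonneg_right (g.norm_coe_le_norm x) (by positivity)

lemma hasDerivAt_one_sub_integral_exp_neg_mul [IsFiniteMeasure lam]
    (hmean : Integrable (fun x : ℝ≥0 => (x : ℝ)) lam) (ht : 0 < t) :
    HasDerivAt (fun s => 1 - ∫ x, rexp (-(x : ℝ) * s) ∂lam)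
      (∫ x, (x : ℝ) * rexp (-(x : ℝ) * t) ∂lam) t := by
  simpa only [BoundedContinuousFunction.coe_one, Pi.one_apply, one_mul, neg_neg] using
    (hasDerivAt_integral_mul_exp_neg_mul hmean 1 ht).const_sub 1

lemma strictMonoOn_one_sub_integral_exp_neg_mul [IsFiniteMeasure lam]
    (hmean : Integrable (fun x : ℝ≥0 => (x : ℝ)) lam) (hlam : lam {0}ᶜ ≠ 0) :
    StrictMonoOn (fun s => 1 - ∫ x, rexp (-(x : ℝ) * s) ∂lam) (Ici 0) := by
  refine strictMonoOn_of_deriv_pos (convex_Ici 0) ?_ fun t ht => ?_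
  · simpa only [BoundedContinuousFunction.coe_one, Pi.one_apply, one_mul] using
      continuousOn_const.fun_sub (continuousOn_integral_mul_exp_neg_mul (lam := lam) 1)
  · rw [interior_Ici] at ht
    rw [(hasDerivAt_one_sub_integral_exp_neg_mul hmean ht).deriv]
    exact integral_coe_mul_exp_neg_mul_pos hmean hlam ht.le

lemma integral_mul_one_sub_exp_neg_mul [IsFiniteMeasure lam] (g : ℝ≥0 →ᵇ ℝ) (ht : 0 ≤ t) :
    ∫ x, g x * (1 - rexp (-(x : ℝ) * t)) ∂lam
      = ∫ x, g x ∂lam - ∫ x, g x * rexp (-(x : ℝ) * t) ∂lam := by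
  simp_rw [mul_one_sub]
  exact integral_sub (g.integrable lam) (integrable_mul_exp_neg_mul g ht)

end Laplace

theorem stmt15_general
    (lam : Measure ℝ≥0) [IsProbabilityMeasure lam] (h0 : lam {0} = 0)
    (hmean : Integrable (fun x : ℝ≥0 => (x : ℝ)) lam)
    (yC : ℝ → ℝ) (hyC : ∀ t : ℝ, yC t = 1 - ∫ x, rexp (-(x : ℝ) * t) ∂lam)
    (t0 : ℝ → ℝ)
    (ht0 : ∀ y ∈ Ico (0 : ℝ) 1, 0 ≤ t0 y ∧ yC (t0 y) = y)
    (y : ℝ) (hy : y ∈ Ico (0 : ℝ) 1) (g : ℝ≥0 →ᵇ ℝ) :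
    ∫ z in (0 : ℝ)..y,
        (∫ x, g x * ((x : ℝ) * rexp (-(x : ℝ) * t0 z)) ∂lam)
          / (∫ x, (x : ℝ) * rexp (-(x : ℝ) * t0 z) ∂lam)
      = ∫ x, g x * (1 - rexp (-(x : ℝ) * t0 y)) ∂lam := by
  have hyC_eq : yC = fun t => 1 - ∫ x, rexp (-(x : ℝ) * t) ∂lam := funext hyC
  have hlam : lam {0}ᶜ ≠ 0 := by simp [h0]
  have hmono : StrictMonoOn yC (Ici 0) :=
    hyC_eq ▸ strictMonoOn_one_sub_integral_exp_neg_mul hmean hlam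
  obtain ⟨hT, hyT⟩ := ht0 y hy
  have hyC0 : yC 0 = 0 := by simp [hyC]
  have hinv : ∀ z ∈ Icc (yC 0) (yC (t0 y)), t0 z ∈ Icc 0 (t0 y) ∧ yC (t0 z) = z := by
    rw [hyC0, hyT]
    intro z hz
    obtain ⟨hz0, hyz⟩ := ht0 z ⟨hz.1, hz.2.trans_lt hy.2⟩
    exact ⟨⟨hz0, (hmono.le_iff_le hz0 hT).1 (by rw [hyz, hyT]; exact hz.2)⟩, hyz⟩
  have key := integral_div_comp_rightInvOn_eq_sub
    (F := fun s => -∫ x, g x * rexp (-(x : ℝ) * s) ∂lam)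
    (N := fun t => ∫ x, g x * ((x : ℝ) * rexp (-(x : ℝ) * t)) ∂lam) hT
    (hmono.mono Icc_subset_Ici_self)
    (fun t ht => hyC_eq ▸ hasDerivAt_one_sub_integral_exp_neg_mul hmean ht.1)
    (fun t ht => integral_coe_mul_exp_neg_mul_pos hmean hlam ht.1.le)
    ((continuousOn_integral_mul_exp_neg_mul g).fun_neg.mono Icc_subset_Ici_self)
    (fun t ht => by
      simpa only [neg_neg] using (hasDerivAt_integral_mul_exp_neg_mul hmean g ht.1).fun_neg)
    (fun t ht => abs_integral_mul_mul_exp_neg_mul_le hmean g ht.1.le)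
    (fun z hz => (hinv z hz).1) (fun z hz => (hinv z hz).2)
  rw [hyC0, hyT] at key
  rw [key, integral_mul_one_sub_exp_neg_mul g hT]
  simp only [mul_zero, exp_zero, mul_one]
  ring

/-- for the inverse `t_0` of `y_C`,
`∫_0^y (∫ g(w) w e^{-w t_0(z)} λ(dw)) / (∫ w e^{-w t_0(z)} λ(dw)) dz
  = ∫ g(w)(1 - e^{-w t_0(y)}) λ(dw)` for all `y ∈ [0,1)`. -/
theorem stmt15
    (lam : Measure ℝ≥0) [IsProbabilityMeasure lam] (h0 : lam {0} = 0)
    (hmean : Integrable (fun x : ℝ≥0 => (x : ℝ)) lam)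
    (yC : ℝ → ℝ) (hyC : ∀ t : ℝ, yC t = 1 - ∫ x, rexp (-(x : ℝ) * t) ∂lam)
    (t0 : ℝ → ℝ)
    (ht0 : ∀ y ∈ Ico (0 : ℝ) 1, 0 ≤ t0 y ∧ yC (t0 y) = y)
    (ht0' : ∀ t : ℝ, 0 ≤ t → t0 (yC t) = t)
    (y : ℝ) (hy : y ∈ Ico (0 : ℝ) 1) (g : ℝ≥0 →ᵇ ℝ) :
    ∫ z in (0 : ℝ)..y,
        (∫ x, g x * ((x : ℝ) * rexp (-(x : ℝ) * t0 z)) ∂lam)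
          / (∫ x, (x : ℝ) * rexp (-(x : ℝ) * t0 z) ∂lam)
      = ∫ x, g x * (1 - rexp (-(x : ℝ) * t0 y)) ∂lam :=
  stmt15_general lam h0 hmean yC hyC t0 ht0 y hy g
end
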